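/- Let (μ_n) be a divergent sequence in X, i.e., a sequence such that d(μ_n, μ₀) → ∞ as n → ∞ for some (equivalently, every) fixed point μ₀ ∈ X. Then for any Borel probability measure P on X, the metric spatial depth satisfies D(μ_n; P) → 0 as n → ∞. -/

import Mathlib

open MeasureTheory
open scoped Classical

/-- The kernel `h` of the metric spatial depth. -/
noncomputable def mh {X : Type*} [MetricSpace X] (x₁ x₂ x₃ : X) : ℝ :=
  if x₃ = x₁ ∨ x₃ = x₂ then 0
  else (dist x₁ x₃ ^ 2 + dist x₂ x₃ ^ 2 - dist x₁ x₂ ^ 2) / (dist x₁ x₃ * dist x₂ x₃)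

/-- The metric spatial depth of `μ` with respect to the measure `P`. -/
noncomputable def msDepth {X : Type*} [MetricSpace X] [MeasurableSpace X]
    (μ : X) (P : Measure X) : ℝ :=
  1 - (1 / 2) * ∫ x₁, ∫ x₂, mh x₁ x₂ μ ∂P ∂P

lemma mh_abs_le {X : Type*} [MetricSpace X] (x₁ x₂ x₃ : X) : |mh x₁ x₂ x₃| ≤ 2 := by
  unfold mh
  split
  · norm_num
  · rename_i h
    push_neg at h
    have h1 : (0:ℝ) < dist x₁ x₃ := dist_pos.2 fun e => h.1 e.symm
    have h2 : (0:ℝ) < dist x₂ x₃ := dist_pos.2 fun e => h.2 e.symm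
    have ht : dist x₁ x₂ ≤ dist x₁ x₃ + dist x₂ x₃ := by
      have := dist_triangle x₁ x₃ x₂
      rw [dist_comm x₃ x₂] at this; linarith
    have ht2 : |dist x₁ x₃ - dist x₂ x₃| ≤ dist x₁ x₂ := abs_dist_sub_le x₁ x₂ x₃
    have hc : (0:ℝ) ≤ dist x₁ x₂ := dist_nonneg
    rw [abs_div, abs_of_pos (mul_pos h1 h2), div_le_iff₀ (mul_pos h1 h2)]
    rw [abs_le] at ht2 ⊢
    constructor <;> nlinarith [sq_nonneg (dist x₁ x₃ - dist x₂ x₃), sq_nonneg (dist x₁ x₃ + dist x₂ x₃)]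

lemma mh_sub_two_abs_le {X : Type*} [MetricSpace X] {x₁ x₂ x₃ : X}
    (hx₁ : x₃ ≠ x₁) (hx₂ : x₃ ≠ x₂) :
    |mh x₁ x₂ x₃ - 2| ≤ dist x₁ x₂ ^ 2 / (dist x₁ x₃ * dist x₂ x₃) := by
  unfold mh
  rw [if_neg (by tauto)]
  have h1 : (0:ℝ) < dist x₁ x₃ := dist_pos.2 fun e => hx₁ e.symm
  have h2 : (0:ℝ) < dist x₂ x₃ := dist_pos.2 fun e => hx₂ e.symm
  have hpos : (0:ℝ) < dist x₁ x₃ * dist x₂ x₃ := mul_pos h1 h2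
  have ht2 : |dist x₁ x₃ - dist x₂ x₃| ≤ dist x₁ x₂ := abs_dist_sub_le x₁ x₂ x₃
  have hc : (0:ℝ) ≤ dist x₁ x₂ := dist_nonneg
  have key : (dist x₁ x₃ ^ 2 + dist x₂ x₃ ^ 2 - dist x₁ x₂ ^ 2) / (dist x₁ x₃ * dist x₂ x₃) - 2
      = (dist x₁ x₃ ^ 2 + dist x₂ x₃ ^ 2 - dist x₁ x₂ ^ 2 - 2 * (dist x₁ x₃ * dist x₂ x₃))
        / (dist x₁ x₃ * dist x₂ x₃) := by
    field_simp
  rw [key, abs_div, abs_of_pos hpos, div_le_div_iff_of_pos_right hpos]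
  rw [abs_le] at ht2 ⊢
  constructor <;> nlinarith [sq_nonneg (dist x₁ x₃ - dist x₂ x₃)]

lemma mh_measurable {X : Type*} [MetricSpace X] [SecondCountableTopology X] [MeasurableSpace X] [BorelSpace X] (μ : X) :
    Measurable (fun p : X × X => mh p.1 p.2 μ) := by
  have hs : MeasurableSet {p : X × X | μ = p.1 ∨ μ = p.2} := by
    have he : {p : X × X | μ = p.1 ∨ μ = p.2}
        = (Prod.fst ⁻¹' {μ}) ∪ (Prod.snd ⁻¹' {μ}) := by
      ext p; simp [eq_comm]
    rw [he]
    exact ((measurableSet_singleton μ).preimage measurable_fst).union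
      ((measurableSet_singleton μ).preimage measurable_snd)
  unfold mh
  refine Measurable.ite hs measurable_const ?_
  have m1 : Measurable fun p : X × X => dist p.1 μ := measurable_fst.dist measurable_const
  have m2 : Measurable fun p : X × X => dist p.2 μ := measurable_snd.dist measurable_const
  have m3 : Measurable fun p : X × X => dist p.1 p.2 := measurable_fst.dist measurable_snd
  exact (((m1.pow_const 2).add (m2.pow_const 2)).sub (m3.pow_const 2)).div (m1.mul m2)

theorem msDepth_tendsto_zero_of_divergent {X : Type*} [MetricSpace X] [CompleteSpace X]
    [SecondCountableTopology X] [MeasurableSpace X] [BorelSpace X]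
    (P : Measure X) [IsProbabilityMeasure P] (μs : ℕ → X) (μ₀ : X)
    (hdiv : Filter.Tendsto (fun n => dist (μs n) μ₀) Filter.atTop Filter.atTop) :
    Filter.Tendsto (fun n => msDepth (μs n) P) Filter.atTop (nhds 0) := by
  -- distance to any point diverges
  have hd : ∀ y : X, Filter.Tendsto (fun n => dist y (μs n)) Filter.atTop Filter.atTop := by
    intro y
    apply Filter.tendsto_atTop_mono (fun n => ?_)
      (Filter.tendsto_atTop_add_const_right _ (-(dist y μ₀)) hdiv)
    have h1 : dist (μs n) μ₀ ≤ dist (μs n) y + dist y μ₀ := dist_triangle _ _ _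
    rw [dist_comm y (μs n)]
    linarith
  -- pointwise convergence of the kernel
  have hpt : ∀ x₁ x₂ : X,
      Filter.Tendsto (fun n => mh x₁ x₂ (μs n)) Filter.atTop (nhds 2) := by
    intro x₁ x₂
    rw [← tendsto_sub_nhds_zero_iff]
    have hg : Filter.Tendsto (fun n => dist x₁ x₂ ^ 2 / (dist x₁ (μs n) * dist x₂ (μs n)))
        Filter.atTop (nhds 0) :=
      Filter.Tendsto.div_atTop tendsto_const_nhds ((hd x₁).atTop_mul_atTop₀ (hd x₂))
    apply squeeze_zero_norm' ?_ hg
    filter_upwards [(hd x₁).eventually_gt_atTop 0, (hd x₂).eventually_gt_atTop 0]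
      with n h1 h2
    have hx₁ : μs n ≠ x₁ := fun e => by simp [e] at h1
    have hx₂ : μs n ≠ x₂ := fun e => by simp [e] at h2
    simpa [Real.norm_eq_abs, dist_comm] using mh_sub_two_abs_le hx₁ hx₂
  -- measurability of the kernel slices
  have meas2 : ∀ (μ x₁ : X), Measurable (fun x₂ => mh x₁ x₂ μ) := by
    intro μ x₁
    exact (mh_measurable μ).comp (measurable_const.prodMk measurable_id)
  -- integrability of interior integrand
  have hint : ∀ (μ x₁ : X), Integrable (fun x₂ => mh x₁ x₂ μ) P := by
    intro μ x₁
    refine (integrable_const (2:ℝ)).mono' (meas2 μ x₁).aestronglyMeasurable ?_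
    exact Filter.Eventually.of_forall fun x => by
      simpa [Real.norm_eq_abs] using mh_abs_le x₁ x μ
  -- inner integrals converge to 2
  have hinner : ∀ x₁ : X,
      Filter.Tendsto (fun n => ∫ x₂, mh x₁ x₂ (μs n) ∂P) Filter.atTop (nhds 2) := by
    intro x₁
    have h2 : (∫ _ : X, (2:ℝ) ∂P) = 2 := by simp
    rw [← h2]
    apply tendsto_integral_of_dominated_convergence (fun _ => (2:ℝ))
      (fun n => (meas2 (μs n) x₁).aestronglyMeasurable) (integrable_const 2)
    · intro n
      exact Filter.Eventually.of_forall fun x => by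
        simpa [Real.norm_eq_abs] using mh_abs_le x₁ x (μs n)
    · exact Filter.Eventually.of_forall fun x₂ => hpt x₁ x₂
  -- outer integrals converge to 2
  have houter : Filter.Tendsto (fun n => ∫ x₁, ∫ x₂, mh x₁ x₂ (μs n) ∂P ∂P)
      Filter.atTop (nhds 2) := by
    have h2 : (∫ _ : X, (2:ℝ) ∂P) = 2 := by simp
    rw [← h2]
    apply tendsto_integral_of_dominated_convergence (fun _ => (2:ℝ))
      (fun n => ?_) (integrable_const 2)
    · intro n
      refine Filter.Eventually.of_forall fun x₁ => ?_
      calc ‖∫ x₂, mh x₁ x₂ (μs n) ∂P‖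
          ≤ 2 * (P Set.univ).toReal := by
            apply norm_integral_le_of_norm_le_const
            exact Filter.Eventually.of_forall fun x => by
              simpa [Real.norm_eq_abs] using mh_abs_le x₁ x (μs n)
        _ = 2 := by simp
    · exact Filter.Eventually.of_forall fun x₁ => hinner x₁
    · exact (StronglyMeasurable.integral_prod_right'
        ((mh_measurable (μs n)).stronglyMeasurable)).aestronglyMeasurable
  -- conclude
  have : Filter.Tendsto (fun n => 1 - (1/2) * ∫ x₁, ∫ x₂, mh x₁ x₂ (μs n) ∂P ∂P)
      Filter.atTop (nhds (1 - (1/2) * 2)) :=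
    Filter.Tendsto.const_sub _ (Filter.Tendsto.const_mul _ houter)
  norm_num at this
  exact this
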